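/- Every Busemann point h of a finite-dimensional real normed space (V, ‖·‖) is of the form h = h*_{E,p} for some extreme set E of the dual unit ball B° and some p ∈ V, and h is not equal to φ_z for any z ∈ V. -/

import Mathlib

open Filter Topology Set

noncomputable section

variable {V : Type*} [NormedAddCommGroup V] [NormedSpace ℝ V]

/-- `φ_z(x) = ‖z − x‖ − ‖z‖`. -/
def phi (z : V) : V → ℝ := fun x => ‖z - x‖ - ‖z‖

/-- A horofunction: a limit, uniformly on compact sets, of functions `φ_{z_n}`,
which is not itself of the form `φ_z`. -/
def IsHorofunction (h : V → ℝ) : Prop :=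
  (∃ z : ℕ → V, ∀ K : Set V, IsCompact K →
      TendstoUniformlyOn (fun n x => phi (z n) x) h atTop K) ∧
  ∀ z : V, h ≠ phi z

/-- An almost-geodesic: a map `γ` defined on an unbounded subset `T` of `[0,∞)`
containing `0` such that for every `ε > 0`,
`|‖γ(t) − γ(s)‖ + ‖γ(s) − γ(0)‖ − t| < ε` for all sufficiently large `s ≤ t` in `T`. -/
def IsAlmostGeodesic (T : Set ℝ) (γ : ℝ → V) : Prop :=
  T ⊆ Set.Ici (0 : ℝ) ∧ (0 : ℝ) ∈ T ∧ ¬ BddAbove T ∧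
  ∀ ε > (0 : ℝ), ∃ M : ℝ, ∀ s ∈ T, ∀ t ∈ T, M ≤ s → s ≤ t →
    |‖γ t - γ s‖ + ‖γ s - γ 0‖ - t| < ε

/-- A Busemann point: a horofunction which is the limit, uniformly on compact sets,
of `φ_{γ(t)}` along an almost-geodesic `γ`. -/
def IsBusemannPoint (h : V → ℝ) : Prop :=
  IsHorofunction h ∧
  ∃ (T : Set ℝ) (γ : ℝ → V), IsAlmostGeodesic T γ ∧
    ∀ K : Set V, IsCompact K → ∀ ε > (0 : ℝ), ∃ M : ℝ, ∀ t ∈ T, M ≤ t →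
      ∀ x ∈ K, |phi (γ t) x - h x| < ε

/-- The dual unit ball `B° = {y ∈ V* : ⟨y,x⟩ ≥ −1 for all x ∈ B}`. -/
def dualBall (V : Type*) [NormedAddCommGroup V] [NormedSpace ℝ V] :
    Set (V →L[ℝ] ℝ) := {y | ∀ x : V, ‖x‖ ≤ 1 → -1 ≤ y x}

/-- `E` is an extreme set of `C`: `E` is a convex subset of `C` such that whenever a
relative interior point of a segment in `C` lies in `E`, both endpoints lie in `E`. -/
def IsExtremeSet {W : Type*} [AddCommGroup W] [Module ℝ W] (C E : Set W) : Prop :=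
  Convex ℝ E ∧ IsExtreme ℝ C E

/-- The Legendre–Fenchel transform `h*_{E,p}` of the function `h_{E,p}` which equals
`⟨·,p⟩ − inf_{y∈E}⟨y,p⟩` on `E` and `+∞` elsewhere; explicitly
`h*_{E,p}(x) = sup_{q∈E} (⟨q,x⟩ − (⟨q,p⟩ − inf_{y∈E}⟨y,p⟩))`. -/
def hstar (E : Set (V →L[ℝ] ℝ)) (p : V) : V → ℝ :=
  fun x => sSup ((fun q : V →L[ℝ] ℝ =>
    q x - (q p - sInf ((fun y : V →L[ℝ] ℝ => y p) '' E))) '' E)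

/-!
Along an almost-geodesic `γ`, for every `y` in the dual unit ball the function
`s ↦ ⟨y, γ s⟩ + s` is almost increasing, so it converges as soon as it is bounded above.
The functionals for which it converges form an extreme set `E` of the ball, and by uniqueness of
limits the limit is affine in `y`; extending it to the whole dual and using reflexivity, it equals
`⟨y, p⟩ + const` for some `p ∈ V`. The estimate `⟨y, γ s - x⟩ ≥ -‖γ s - x‖` gives
`h x ≥ ⟨y, x⟩ - ⟨y, p⟩ + inf_E ⟨·, p⟩` for `y ∈ E`, and a limit of norming functionals of
`x - γ (t k)`, obtained by compactness of the dual ball, attains it.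
-/

theorem neg_norm_le_apply {y : V →L[ℝ] ℝ} (hy : ‖y‖ ≤ 1) (v : V) : -‖v‖ ≤ y v := by
  have := y.le_of_opNorm_le hy v
  rw [one_mul, Real.norm_eq_abs] at this
  exact neg_le_of_abs_le this

theorem dualBall_eq_closedBall : dualBall V = Metric.closedBall 0 1 := by
  ext y
  rw [mem_closedBall_zero_iff]
  refine ⟨fun hy => y.opNorm_le_of_unit_norm zero_le_one fun v hv => ?_,
    fun hy v hv => by linarith [neg_norm_le_apply hy v]⟩
  have h₁ := hy v hv.le
  have h₂ := hy (-v) (by rw [norm_neg, hv])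
  rw [map_neg] at h₂
  exact abs_le.2 ⟨by linarith, by linarith⟩

theorem hstar_eq_of_isLeast_of_isGreatest {E : Set (V →L[ℝ] ℝ)} {p x : V} {y₀ : V →L[ℝ] ℝ}
    {v : ℝ} (hmin : IsLeast ((fun y : V →L[ℝ] ℝ => y p) '' E) (y₀ p))
    (hmax : IsGreatest ((fun y : V →L[ℝ] ℝ => y x - (y p - y₀ p)) '' E) v) :
    hstar E p x = v := by
  rw [hstar, hmin.csInf_eq, hmax.csSup_eq]

section AlmostIncreasing

variable {α : Type*} {F : Filter α} {f : α → ℝ}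

def AlmostIncreasing (F : Filter α) (f : α → ℝ) : Prop :=
  ∀ ε > 0, ∀ᶠ s in F, ∀ᶠ t in F, f s - ε ≤ f t

theorem AlmostIncreasing.isBoundedUnder_ge [F.NeBot] (hf : AlmostIncreasing F f) :
    F.IsBoundedUnder (· ≥ ·) f :=
  let ⟨_, hs⟩ := (hf 1 one_pos).exists
  isBoundedUnder_of_eventually_ge hs

theorem AlmostIncreasing.exists_tendsto [F.NeBot] (hf : AlmostIncreasing F f)
    (hbdd : F.IsBoundedUnder (· ≤ ·) f) : ∃ L, Tendsto f F (𝓝 L) := by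
  have hbdd' := hf.isBoundedUnder_ge
  refine ⟨limsup f F, tendsto_of_liminf_eq_limsup
    (le_antisymm (liminf_le_limsup hbdd hbdd') ?_) rfl hbdd hbdd'⟩
  refine le_of_forall_pos_le_add fun ε hε => ?_
  obtain ⟨s, hs, hst⟩ := ((frequently_lt_of_lt_limsup hbdd'.isCoboundedUnder_le
    (sub_lt_self _ (half_pos hε))).and_eventually (hf _ (half_pos hε))).exists
  have : limsup f F - ε ≤ liminf f F :=
    le_liminf_of_le hbdd.isCoboundedUnder_ge (hst.mono fun t ht => by linarith)
  linarith

end AlmostIncreasing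

section LimitFunctional

variable {α W : Type*} [AddCommGroup W] [Module ℝ W] (F : Filter α) (γ : α → W)

def convergentFunctionals : Submodule ℝ (Module.Dual ℝ W) where
  carrier := {w | ∃ L, Tendsto (fun s => w (γ s)) F (𝓝 L)}
  add_mem' := fun ⟨L₁, h₁⟩ ⟨L₂, h₂⟩ => ⟨L₁ + L₂, by simpa using h₁.add h₂⟩
  zero_mem' := ⟨0, by simpa using tendsto_const_nhds⟩
  smul_mem' r _ := fun ⟨L, h⟩ => ⟨r * L, by simpa using h.const_mul r⟩

theorem tendsto_limUnder_convergentFunctionals (w : convergentFunctionals F γ) :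
    Tendsto (fun s => (w : Module.Dual ℝ W) (γ s)) F
      (𝓝 (limUnder F fun s => (w : Module.Dual ℝ W) (γ s))) :=
  tendsto_nhds_limUnder w.2

def limFunctional [F.NeBot] : convergentFunctionals F γ →ₗ[ℝ] ℝ where
  toFun w := limUnder F fun s => (w : Module.Dual ℝ W) (γ s)
  map_add' w₁ w₂ := by
    refine Tendsto.limUnder_eq ?_
    simpa using (tendsto_limUnder_convergentFunctionals F γ w₁).add
      (tendsto_limUnder_convergentFunctionals F γ w₂)
  map_smul' r w := by
    refine Tendsto.limUnder_eq ?_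
    simpa using (tendsto_limUnder_convergentFunctionals F γ w).const_mul r

theorem exists_forall_tendsto_eq_apply [FiniteDimensional ℝ W] [F.NeBot] :
    ∃ p : W, ∀ (w : Module.Dual ℝ W) (L : ℝ), Tendsto (fun s => w (γ s)) F (𝓝 L) → L = w p := by
  obtain ⟨Φ, hΦ⟩ := (limFunctional F γ).exists_extend
  refine ⟨(Module.evalEquiv ℝ W).symm Φ, fun w L hL => ?_⟩
  rw [Module.apply_evalEquiv_symm_apply, ← hL.limUnder_eq]
  exact (LinearMap.congr_fun hΦ ⟨w, L, hL⟩).symm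

end LimitFunctional

section AlmostGeodesicAlong

variable {E : Type*} [SeminormedAddCommGroup E] {F : Filter ℝ} {γ : ℝ → E}

/-- The filter form of `IsAlmostGeodesic T γ`, for `F = atTop ⊓ 𝓟 T`. -/
structure IsAlmostGeodesicAlong (F : Filter ℝ) (γ : ℝ → E) : Prop where
  norm_sub_le : ∀ ε > 0, ∀ᶠ s in F, ∀ᶠ t in F, ‖γ t - γ s‖ ≤ t - s + ε
  isBoundedUnder_sub_norm : F.IsBoundedUnder (· ≤ ·) fun s => s - ‖γ s‖

theorem IsAlmostGeodesicAlong.exists_tendsto_sub_norm [F.NeBot] (hγ : IsAlmostGeodesicAlong F γ) :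
    ∃ c, Tendsto (fun s => s - ‖γ s‖) F (𝓝 c) :=
  AlmostIncreasing.exists_tendsto (fun ε hε => (hγ.norm_sub_le ε hε).mono fun s hs =>
    hs.mono fun t ht => by linarith [norm_le_norm_add_norm_sub' (γ t) (γ s)])
    hγ.isBoundedUnder_sub_norm

end AlmostGeodesicAlong

theorem apply_sub_add_le_of_tendsto {F : Filter ℝ} [F.NeBot] {γ : ℝ → V} {c : ℝ}
    (hc : Tendsto (fun s => s - ‖γ s‖) F (𝓝 c)) {y : V →L[ℝ] ℝ} (hy : ‖y‖ ≤ 1) {L : ℝ}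
    (hL : Tendsto (fun s => y (γ s) + s) F (𝓝 L)) {x : V} {a : ℝ}
    (hx : Tendsto (fun s => phi (γ s) x) F (𝓝 a)) : y x - L + c ≤ a :=
  le_of_tendsto_of_tendsto' ((tendsto_const_nhds.sub hL).add hc) hx fun s => by
    have := neg_norm_le_apply hy (γ s - x)
    rw [map_sub] at this
    simp only [phi]
    linarith

namespace IsAlmostGeodesicAlong

variable {F : Filter ℝ} {γ : ℝ → V}

theorem eventually_apply_add_le (hγ : IsAlmostGeodesicAlong F γ) {ε : ℝ} (hε : 0 < ε) :
    ∀ᶠ s in F, ∀ᶠ t in F, ∀ y : V →L[ℝ] ℝ, ‖y‖ ≤ 1 → y (γ s) + s - ε ≤ y (γ t) + t :=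
  (hγ.norm_sub_le ε hε).mono fun s hs => hs.mono fun t ht y hy => by
    have := neg_norm_le_apply hy (γ t - γ s)
    rw [map_sub] at this
    linarith

theorem almostIncreasing_apply_add (hγ : IsAlmostGeodesicAlong F γ) {y : V →L[ℝ] ℝ}
    (hy : ‖y‖ ≤ 1) : AlmostIncreasing F fun s => y (γ s) + s :=
  fun _ hε => (hγ.eventually_apply_add_le hε).mono fun _ hs => hs.mono fun _ ht => ht y hy

theorem exists_tendsto_le_of_tendsto_seq [F.NeBot] (hγ : IsAlmostGeodesicAlong F γ)
    {y : V →L[ℝ] ℝ} {z : ℕ → V →L[ℝ] ℝ} (hz : ∀ k, ‖z k‖ ≤ 1) (hzy : Tendsto z atTop (𝓝 y))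
    {t : ℕ → ℝ} (ht : Tendsto t atTop F) {M : ℝ}
    (hM : Tendsto (fun k => z k (γ (t k)) + t k) atTop (𝓝 M)) :
    ∃ L ≤ M, Tendsto (fun s => y (γ s) + s) F (𝓝 L) := by
  have hy : ‖y‖ ≤ 1 := le_of_tendsto ((continuous_norm.tendsto y).comp hzy) (.of_forall hz)
  have hbound : ∀ ε > 0, ∀ᶠ s in F, y (γ s) + s ≤ M + ε := fun ε hε =>
    (hγ.eventually_apply_add_le hε).mono fun s hs => by
      have hlim : Tendsto (fun k => z k (γ s) + s - ε) atTop (𝓝 (y (γ s) + s - ε)) :=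
        ((((continuous_eval_const (γ s)).tendsto y).comp hzy).add_const s).sub_const ε
      have := le_of_tendsto_of_tendsto hlim hM
        ((ht.eventually hs).mono fun k hk => hk (z k) (hz k))
      linarith
  obtain ⟨L, hL⟩ := (hγ.almostIncreasing_apply_add hy).exists_tendsto
    (isBoundedUnder_of_eventually_le (hbound 1 one_pos))
  exact ⟨L, le_of_forall_pos_le_add fun ε hε => le_of_tendsto hL (hbound ε hε), hL⟩

theorem exists_tendsto_apply_add [FiniteDimensional ℝ V] [F.NeBot] [F.IsCountablyGenerated]
    (hγ : IsAlmostGeodesicAlong F γ) {c : ℝ} (hc : Tendsto (fun s => s - ‖γ s‖) F (𝓝 c))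
    {x : V} {a : ℝ} (hx : Tendsto (fun s => phi (γ s) x) F (𝓝 a)) :
    ∃ y : V →L[ℝ] ℝ, ‖y‖ ≤ 1 ∧ Tendsto (fun s => y (γ s) + s) F (𝓝 (y x - a + c)) := by
  obtain ⟨t, ht⟩ := F.exists_seq_tendsto
  choose z hz hzx using fun k => exists_dual_vector'' ℝ (x - γ (t k))
  obtain ⟨y, hy, φ, hφ, hzy⟩ := (isCompact_closedBall (0 : V →L[ℝ] ℝ) 1).tendsto_subseq
    fun k => mem_closedBall_zero_iff.2 (hz k)
  have htφ : Tendsto (fun k => t (φ k)) atTop F := ht.comp hφ.tendsto_atTop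
  have hM : Tendsto (fun k => z (φ k) (γ (t (φ k))) + t (φ k)) atTop (𝓝 (y x - a + c)) := by
    refine (((((continuous_eval_const x).tendsto y).comp hzy).sub (hx.comp htφ)).add
      (hc.comp htφ)).congr fun k => ?_
    -- `z k` norms `x - γ (t k)`, which makes `z k (γ (t k)) + t k` an exact combination of the
    -- quantities whose limits are known.
    have := hzx (φ k)
    rw [map_sub, norm_sub_rev] at this
    simp only [Function.comp_apply, phi, RCLike.ofReal_real_eq_id, id] at this ⊢
    linarith
  obtain ⟨L, hLM, hL⟩ := hγ.exists_tendsto_le_of_tendsto_seq (fun k => hz (φ k)) hzy htφ hM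
  have hy : ‖y‖ ≤ 1 := mem_closedBall_zero_iff.1 hy
  have hML : y x - a + c ≤ L := by linarith [apply_sub_add_le_of_tendsto hc hy hL hx]
  exact ⟨y, hy, le_antisymm hLM hML ▸ hL⟩

end IsAlmostGeodesicAlong

def busemannFace (F : Filter ℝ) (γ : ℝ → V) : Set (V →L[ℝ] ℝ) :=
  {y | ‖y‖ ≤ 1 ∧ ∃ L, Tendsto (fun s => y (γ s) + s) F (𝓝 L)}

theorem convex_busemannFace (F : Filter ℝ) (γ : ℝ → V) : Convex ℝ (busemannFace F γ) := by
  rintro y₁ ⟨hy₁, L₁, hL₁⟩ y₂ ⟨hy₂, L₂, hL₂⟩ a b ha hb hab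
  refine ⟨mem_closedBall_zero_iff.1 <| convex_closedBall 0 1
    (mem_closedBall_zero_iff.2 hy₁) (mem_closedBall_zero_iff.2 hy₂) ha hb hab,
    a * L₁ + b * L₂, ?_⟩
  refine ((hL₁.const_mul a).add (hL₂.const_mul b)).congr fun s => ?_
  simp only [add_apply, smul_apply, smul_eq_mul]
  linear_combination s * hab

theorem IsAlmostGeodesicAlong.isExtreme_busemannFace {F : Filter ℝ} [F.NeBot] {γ : ℝ → V}
    (hγ : IsAlmostGeodesicAlong F γ) :
    IsExtreme ℝ (Metric.closedBall 0 1) (busemannFace F γ) := by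
  refine (isExtreme_iff _ _ _).2 ⟨fun y hy => mem_closedBall_zero_iff.2 hy.1, ?_⟩
  rintro z₁ hz₁ z₂ hz₂ _ ⟨-, L, hL⟩ ⟨a, b, ha, hb, hab, rfl⟩
  rw [mem_closedBall_zero_iff] at hz₁ hz₂
  refine ⟨hz₁, (hγ.almostIncreasing_apply_add hz₁).exists_tendsto ?_⟩
  obtain ⟨A, hA⟩ := hL.isBoundedUnder_le.eventually_le
  obtain ⟨B, hB⟩ := (hγ.almostIncreasing_apply_add hz₂).isBoundedUnder_ge.eventually_ge
  refine isBoundedUnder_of_eventually_le (a := (A - b * B) / a) ?_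
  filter_upwards [hA, hB] with s hsA hsB
  simp only [add_apply, smul_apply, smul_eq_mul] at hsA
  rw [le_div_iff₀ ha]
  linear_combination hsA + b * hsB + s * hab

theorem neBot_atTop_inf_principal {T : Set ℝ} (hT : ¬BddAbove T) : (atTop ⊓ 𝓟 T).NeBot :=
  frequently_iff_neBot.1 <| frequently_atTop.2 fun a =>
    let ⟨t, ht, hat⟩ := not_bddAbove_iff.1 hT a
    ⟨t, hat.le, ht⟩

theorem IsAlmostGeodesic.isAlmostGeodesicAlong {E : Type*} [NormedAddCommGroup E] {T : Set ℝ}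
    {γ : ℝ → E} (hγ : IsAlmostGeodesic T γ) : IsAlmostGeodesicAlong (atTop ⊓ 𝓟 T) γ := by
  obtain ⟨-, -, -, hag⟩ := hγ
  have key : ∀ ε > 0, ∀ᶠ s in atTop ⊓ 𝓟 T,
      s ∈ T ∧ ∀ t ∈ T, s ≤ t → |‖γ t - γ s‖ + ‖γ s - γ 0‖ - t| < ε := fun ε hε =>
    let ⟨M, hM⟩ := hag ε hε
    eventually_inf_principal.2 <| (eventually_ge_atTop M).mono fun s hs hsT =>
      ⟨hsT, fun t ht hst => hM s hsT t ht hs hst⟩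
  have diag : ∀ ε > 0, ∀ᶠ s in atTop ⊓ 𝓟 T, |‖γ s - γ 0‖ - s| < ε := fun ε hε =>
    (key ε hε).mono fun s ⟨hsT, hs⟩ => by simpa using hs s hsT le_rfl
  refine ⟨fun ε hε => ?_, isBoundedUnder_of_eventually_le (a := 1 + ‖γ 0‖) ?_⟩
  · filter_upwards [key (ε / 2) (half_pos hε), diag (ε / 2) (half_pos hε)] with s hs hsd
    refine eventually_inf_principal.2 <| (eventually_ge_atTop s).mono fun t hst htT => ?_
    have h₁ := abs_lt.1 (hs.2 t htT hst)
    have h₂ := abs_lt.1 hsd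
    linarith
  · filter_upwards [diag 1 one_pos] with s hs
    linarith [(abs_lt.1 hs).1, norm_sub_le (γ s) (γ 0)]

theorem IsAlmostGeodesicAlong.exists_hstar_eq [FiniteDimensional ℝ V] {F : Filter ℝ} [F.NeBot]
    [F.IsCountablyGenerated] {γ : ℝ → V} (hγ : IsAlmostGeodesicAlong F γ) {h : V → ℝ}
    (hh : ∀ x, Tendsto (fun s => phi (γ s) x) F (𝓝 (h x))) :
    ∃ (E : Set (V →L[ℝ] ℝ)) (p : V),
      IsExtremeSet (dualBall V) E ∧ E.Nonempty ∧ h = hstar E p := by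
  obtain ⟨c, hc⟩ := hγ.exists_tendsto_sub_norm
  obtain ⟨p, hp⟩ := exists_forall_tendsto_eq_apply F γ
  have hh0 : h 0 = 0 := tendsto_nhds_unique (hh 0) (by simp [phi])
  obtain ⟨y₀, hy₀, hy₀c⟩ := hγ.exists_tendsto_apply_add hc (hh 0)
  rw [map_zero, hh0, sub_zero, zero_add] at hy₀c
  have hlim : ∀ (y : V →L[ℝ] ℝ) (L : ℝ), Tendsto (fun s => y (γ s) + s) F (𝓝 L) →
      L = y p - y₀ p + c := by
    intro y L hL
    have := hp ((y - y₀ : V →L[ℝ] ℝ) : V →ₗ[ℝ] ℝ) (L - c) ((hL.sub hy₀c).congr fun s => by simp)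
    simp only [ContinuousLinearMap.toLinearMap_sub, LinearMap.sub_apply,
      ContinuousLinearMap.coe_coe] at this
    linarith
  have hle : ∀ y ∈ busemannFace F γ, ∀ x, y x - (y p - y₀ p) ≤ h x := by
    rintro y ⟨hy, L, hL⟩ x
    linarith [apply_sub_add_le_of_tendsto hc hy hL (hh x), hlim y L hL]
  have hy₀E : y₀ ∈ busemannFace F γ := ⟨hy₀, c, hy₀c⟩
  have hmin : IsLeast ((fun y : V →L[ℝ] ℝ => y p) '' busemannFace F γ) (y₀ p) := by
    refine ⟨⟨y₀, hy₀E, rfl⟩, ?_⟩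
    rintro _ ⟨y, hy, rfl⟩
    have := hle y hy 0
    rw [map_zero, hh0] at this
    linarith
  have hmax : ∀ x, IsGreatest
      ((fun y : V →L[ℝ] ℝ => y x - (y p - y₀ p)) '' busemannFace F γ) (h x) := by
    refine fun x => ⟨?_, by rintro _ ⟨y, hy, rfl⟩; exact hle y hy x⟩
    obtain ⟨y, hy, hyx⟩ := hγ.exists_tendsto_apply_add hc (hh x)
    exact ⟨y, ⟨hy, _, hyx⟩, by linarith [hlim y _ hyx]⟩
  refine ⟨busemannFace F γ, p, ?_, ⟨y₀, hy₀E⟩,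
    funext fun x => (hstar_eq_of_isLeast_of_isGreatest hmin (hmax x)).symm⟩
  rw [dualBall_eq_closedBall]
  exact ⟨convex_busemannFace F γ, hγ.isExtreme_busemannFace⟩

theorem busemann_point_form (V : Type*) [NormedAddCommGroup V] [NormedSpace ℝ V]
    [FiniteDimensional ℝ V] (h : V → ℝ) (hb : IsBusemannPoint h) :
    (∃ (E : Set (V →L[ℝ] ℝ)) (p : V),
      IsExtremeSet (dualBall V) E ∧ E.Nonempty ∧ h = hstar E p) ∧
    ∀ z : V, h ≠ phi z := by
  obtain ⟨⟨-, hnot⟩, T, γ, hγ, hconv⟩ := hb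
  have : (atTop ⊓ 𝓟 T).NeBot := neBot_atTop_inf_principal hγ.2.2.1
  have hh : ∀ x, Tendsto (fun s => phi (γ s) x) (atTop ⊓ 𝓟 T) (𝓝 (h x)) := fun x =>
    Metric.tendsto_nhds.2 fun ε hε =>
      let ⟨M, hM⟩ := hconv {x} isCompact_singleton ε hε
      eventually_inf_principal.2 <| (eventually_ge_atTop M).mono fun t ht htT =>
        hM t htT ht x rfl
  exact ⟨hγ.isAlmostGeodesicAlong.exists_hstar_eq hh, hnot⟩
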